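/- arXiv:1305.2023 — 3 statements merged into one kernel-verified Lean document; each statement's English description precedes it below -/
import Mathlib

section
/- For probability distributions p, q with q strictly positive, the minimum over all permutations π of H(p‖q∘π) equals H(p↓‖q↓), and this minimum is attained. -/
/-- Classical relative entropy with convention `0 * log 0 = 0` (automatic since
`Real.log 0 = 0`). -/
noncomputable def relEnt {d : ℕ} (p q : Fin d → ℝ) : ℝ :=
  ∑ i, p i * (Real.log (p i) - Real.log (q i))

/-- Non-decreasing rearrangement `p↑`. -/
noncomputable def sortAsc {d : ℕ} (p : Fin d → ℝ) : Fin d → ℝ :=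
  p ∘ Tuple.sort p

/-- Non-increasing rearrangement `p↓`. -/
noncomputable def sortDesc {d : ℕ} (p : Fin d → ℝ) : Fin d → ℝ :=
  (p ∘ Tuple.sort p) ∘ Fin.rev

/-!
Relabelling both arguments by the same permutation leaves `H(p‖q)` unchanged, so `H(p‖q ∘ π)`
equals `H(p↓‖q↓ ∘ τ)` for some permutation `τ`. Only the cross term `∑ p↓ᵢ log q↓_{τ i}` depends
on `τ`, and since `p↓` and `log q↓` are both non-increasing, the rearrangement inequality says it
is largest for `τ = id`.
-/

open Finset

section

variable {d : ℕ}

noncomputable def sortDescPerm (p : Fin d → ℝ) : Equiv.Perm (Fin d) :=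
  Fin.revPerm.trans (Tuple.sort p)

lemma sortDesc_eq_comp (p : Fin d → ℝ) : sortDesc p = p ∘ sortDescPerm p := rfl

lemma sortDesc_antitone (p : Fin d → ℝ) : Antitone (sortDesc p) :=
  fun _ _ hij => Tuple.monotone_sort p (Fin.rev_le_rev.2 hij)

lemma monovary_sortDesc_log_sortDesc (p : Fin d → ℝ) {q : Fin d → ℝ} (hq : ∀ i, 0 < q i) :
    Monovary (sortDesc p) fun i => Real.log (sortDesc q i) :=
  (sortDesc_antitone p).monovary fun _ _ hij =>
    Real.log_le_log (hq _) (sortDesc_antitone q hij)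

lemma relEnt_comp_perm (p q : Fin d → ℝ) (σ : Equiv.Perm (Fin d)) :
    relEnt (p ∘ σ) (q ∘ σ) = relEnt p q :=
  Equiv.sum_comp σ fun i => p i * (Real.log (p i) - Real.log (q i))

lemma relEnt_comp_perm_eq_relEnt_sortDesc (p q : Fin d → ℝ) (π : Equiv.Perm (Fin d)) :
    relEnt p (q ∘ π) = relEnt (sortDesc p)
      (sortDesc q ∘ ((sortDescPerm p).trans (π.trans (sortDescPerm q).symm))) := by
  rw [← relEnt_comp_perm p (q ∘ π) (sortDescPerm p), sortDesc_eq_comp, sortDesc_eq_comp]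
  congr 1
  ext i
  simp only [Function.comp_apply, Equiv.trans_apply, Equiv.apply_symm_apply]

lemma relEnt_le_relEnt_comp_perm {p q : Fin d → ℝ}
    (h : Monovary p fun i => Real.log (q i)) (τ : Equiv.Perm (Fin d)) :
    relEnt p q ≤ relEnt p (q ∘ τ) := by
  have hcross := h.sum_mul_comp_perm_le_sum_mul (σ := τ)
  simp only [relEnt, mul_sub, sum_sub_distrib, Function.comp_apply]
  linarith

end

theorem stmt_2_general {d : ℕ} (p q : Fin d → ℝ)
    (hq : ∀ i, 0 < q i) :
    (∀ π : Equiv.Perm (Fin d), relEnt (sortDesc p) (sortDesc q) ≤ relEnt p (q ∘ π)) ∧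
    (∃ π : Equiv.Perm (Fin d), relEnt p (q ∘ π) = relEnt (sortDesc p) (sortDesc q)) := by
  refine ⟨fun π => ?_, ⟨(sortDescPerm p).symm.trans (sortDescPerm q), ?_⟩⟩
  · rw [relEnt_comp_perm_eq_relEnt_sortDesc]
    exact relEnt_le_relEnt_comp_perm (monovary_sortDesc_log_sortDesc p hq) _
  · rw [relEnt_comp_perm_eq_relEnt_sortDesc]
    congr 1
    ext i
    simp only [Function.comp_apply, Equiv.trans_apply, Equiv.symm_apply_apply]

theorem stmt_2 {d : ℕ} (p q : Fin d → ℝ)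
    (hp : ∀ i, 0 ≤ p i) (hq : ∀ i, 0 < q i)
    (hps : ∑ i, p i = 1) (hqs : ∑ i, q i = 1) :
    (∀ π : Equiv.Perm (Fin d), relEnt (sortDesc p) (sortDesc q) ≤ relEnt p (q ∘ π)) ∧
    (∃ π : Equiv.Perm (Fin d), relEnt p (q ∘ π) = relEnt (sortDesc p) (sortDesc q)) :=
  stmt_2_general p q hq
end

section
/- Let ρ_AB, σ_AB be density matrices on ℂ^{d_A}⊗ℂ^{d_B} with σ_AB positive definite. If H(λ↓(ρ_AB)‖λ↓(σ_AB)) ≥ H(λ↓(ρ_A)‖λ↑(σ_A)) + H(λ↓(ρ_B)‖λ↑(σ_B)), then there exist unitaries U_A, U_B, U_AB such that S(U_AB ρ_AB U_AB*‖σ_AB) ≥ S(U_A ρ_A U_A*‖σ_A) + S(U_B ρ_B U_B*‖σ_B). -/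
open Matrix ComplexOrder

/-- Matrix logarithm of a Hermitian matrix via its spectral decomposition
(junk value `0` on non-Hermitian matrices). -/
noncomputable def matLog {n : Type*} [Fintype n] [DecidableEq n]
    (A : Matrix n n ℂ) : Matrix n n ℂ :=
  if h : A.IsHermitian then
    (h.eigenvectorUnitary : Matrix n n ℂ) *
      Matrix.diagonal (fun i => (Real.log (h.eigenvalues i) : ℂ)) *
      (star h.eigenvectorUnitary : Matrix n n ℂ)
  else 0

/-- Eigenvalue vector of a Hermitian matrix (junk value `0` otherwise). -/
noncomputable def evals {n : Type*} [Fintype n] [DecidableEq n]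
    (A : Matrix n n ℂ) : n → ℝ :=
  if h : A.IsHermitian then h.eigenvalues else 0

/-- Quantum relative entropy `S(ρ‖σ) = Tr (ρ (log ρ − log σ))`. -/
noncomputable def qRelEnt {n : Type*} [Fintype n] [DecidableEq n]
    (ρ σ : Matrix n n ℂ) : ℝ :=
  ((ρ * (matLog ρ - matLog σ)).trace).re

/-- von Neumann entropy `S(ρ) = −Tr (ρ log ρ)`. -/
noncomputable def vnEnt {n : Type*} [Fintype n] [DecidableEq n]
    (ρ : Matrix n n ℂ) : ℝ :=
  -((ρ * matLog ρ).trace).re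

/-- Partial trace over the second (B) factor. -/
noncomputable def ptraceB {a b : ℕ}
    (ρ : Matrix (Fin a × Fin b) (Fin a × Fin b) ℂ) : Matrix (Fin a) (Fin a) ℂ :=
  fun i j => ∑ k, ρ (i, k) (j, k)

/-- Partial trace over the first (A) factor. -/
noncomputable def ptraceA {a b : ℕ}
    (ρ : Matrix (Fin a × Fin b) (Fin a × Fin b) ℂ) : Matrix (Fin b) (Fin b) ℂ :=
  fun i j => ∑ k, ρ (k, i) (k, j)

/-- Eigenvalues of a matrix on a bipartite space, reindexed by `Fin (a*b)`. -/
noncomputable def evalsP {a b : ℕ}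
    (ρ : Matrix (Fin a × Fin b) (Fin a × Fin b) ℂ) : Fin (a * b) → ℝ :=
  evals ρ ∘ finProdFinEquiv.symm

/-!
Write `ρ = V diag(λ) V*` and `σ = W diag(μ) W*`. For a permutation matrix `P_τ`, the unitary
`W P_τ V*` carries `ρ` to `W diag(λ ∘ τ) W*`, which is diagonal in the eigenbasis of `σ`. The
matrix logarithm commutes with unitary conjugation (it is a continuous functional calculus), so
the quantum relative entropy of the rotated state is the classical `H(λ ∘ τ ‖ μ)`. Choosing `τ`
to pair `λ↓` with `μ↓` for `ρ_AB`, and with `μ↑` for the marginals, turns the classical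
hypothesis into the quantum conclusion.
-/

section UnitaryOrbit

variable {n : Type*} [Fintype n] [DecidableEq n]

lemma matLog_eq_cfc {A : Matrix n n ℂ} (hA : A.IsHermitian) : matLog A = cfc Real.log A := by
  rw [matLog, dif_pos hA, hA.cfc_eq, IsHermitian.cfc]
  rfl

lemma matLog_unitary_conj {U : Matrix n n ℂ} (hU : U ∈ unitaryGroup n ℂ) {A : Matrix n n ℂ}
    (hA : A.IsHermitian) : matLog (U * A * Uᴴ) = U * matLog A * Uᴴ := by
  let φ := Unitary.conjStarAlgAut ℂ (Matrix n n ℂ) ⟨U, hU⟩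
  have hφ : Continuous φ := by
    change Continuous fun X : Matrix n n ℂ => U * X * Uᴴ
    fun_prop
  have hUA : (U * A * Uᴴ).IsHermitian := isHermitian_mul_mul_conjTranspose U hA
  rw [matLog_eq_cfc hA, matLog_eq_cfc hUA]
  exact (StarAlgHomClass.map_cfc φ Real.log A (A.finite_real_spectrum.continuousOn _) hφ
    hA.isSelfAdjoint hUA.isSelfAdjoint).symm

lemma matLog_of_isHermitian {A : Matrix n n ℂ} (hA : A.IsHermitian) :
    matLog A = (hA.eigenvectorUnitary : Matrix n n ℂ) *
      diagonal (RCLike.ofReal ∘ Real.log ∘ hA.eigenvalues) *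
        (hA.eigenvectorUnitary : Matrix n n ℂ)ᴴ := by
  rw [matLog, dif_pos hA]
  rfl

lemma evals_of_isHermitian {A : Matrix n n ℂ} (hA : A.IsHermitian) : evals A = hA.eigenvalues :=
  dif_pos hA

lemma permMatrix_mem_unitaryGroup (τ : Equiv.Perm n) : τ.permMatrix ℂ ∈ unitaryGroup n ℂ := by
  rw [mem_unitaryGroup_iff, star_eq_conjTranspose, conjTranspose_permMatrix, ← permMatrix_mul,
    inv_mul_cancel, permMatrix_one]

lemma permMatrix_mul_diagonal_mul_conjTranspose (τ : Equiv.Perm n) (d : n → ℂ) :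
    τ.permMatrix ℂ * diagonal d * (τ.permMatrix ℂ)ᴴ = diagonal (d ∘ τ) := by
  rw [conjTranspose_permMatrix, PEquiv.toMatrix_toPEquiv_mul, PEquiv.mul_toMatrix_toPEquiv,
    submatrix_submatrix]
  exact submatrix_diagonal_equiv d τ

lemma unitary_perm_conj_diagonal {V : Matrix n n ℂ} (hV : V ∈ unitaryGroup n ℂ)
    (W : Matrix n n ℂ) (τ : Equiv.Perm n) (d : n → ℂ) :
    (W * τ.permMatrix ℂ * Vᴴ) * (V * diagonal d * Vᴴ) * (W * τ.permMatrix ℂ * Vᴴ)ᴴ =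
      W * diagonal (d ∘ τ) * Wᴴ := by
  have hVV : Vᴴ * V = 1 := mem_unitaryGroup_iff'.mp hV
  calc (W * τ.permMatrix ℂ * Vᴴ) * (V * diagonal d * Vᴴ) * (W * τ.permMatrix ℂ * Vᴴ)ᴴ
      = W * (τ.permMatrix ℂ * ((Vᴴ * V) * diagonal d * (Vᴴ * V)) * (τ.permMatrix ℂ)ᴴ) * Wᴴ := by
        simp only [conjTranspose_mul, conjTranspose_conjTranspose, Matrix.mul_assoc]
    _ = W * diagonal (d ∘ τ) * Wᴴ := by
        rw [hVV, Matrix.one_mul, Matrix.mul_one, permMatrix_mul_diagonal_mul_conjTranspose]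

lemma trace_unitary_conj_diagonal_mul {W : Matrix n n ℂ} (hW : W ∈ unitaryGroup n ℂ)
    (a b : n → ℂ) : (W * diagonal a * Wᴴ * (W * diagonal b * Wᴴ)).trace = ∑ i, a i * b i := by
  have hWW : Wᴴ * W = 1 := mem_unitaryGroup_iff'.mp hW
  calc (W * diagonal a * Wᴴ * (W * diagonal b * Wᴴ)).trace
      = (W * (diagonal a * (Wᴴ * W) * diagonal b) * Wᴴ).trace := by
        simp only [Matrix.mul_assoc]
    _ = ∑ i, a i * b i := by
        rw [trace_mul_cycle, hWW, Matrix.one_mul, Matrix.mul_one, diagonal_mul_diagonal,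
          trace_diagonal]

theorem exists_unitary_qRelEnt_eq_sum {ρ σ : Matrix n n ℂ} (hρ : ρ.IsHermitian)
    (hσ : σ.IsHermitian) (τ : Equiv.Perm n) :
    ∃ U ∈ unitaryGroup n ℂ, qRelEnt (U * ρ * Uᴴ) σ =
      ∑ i, evals ρ (τ i) * (Real.log (evals ρ (τ i)) - Real.log (evals σ i)) := by
  set V : Matrix n n ℂ := ↑hρ.eigenvectorUnitary
  set W : Matrix n n ℂ := ↑hσ.eigenvectorUnitary
  have hV : V ∈ unitaryGroup n ℂ := hρ.eigenvectorUnitary.2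
  have hW : W ∈ unitaryGroup n ℂ := hσ.eigenvectorUnitary.2
  have hU : W * τ.permMatrix ℂ * Vᴴ ∈ unitaryGroup n ℂ :=
    mul_mem (mul_mem hW (permMatrix_mem_unitaryGroup τ)) (Unitary.star_mem hV)
  refine ⟨_, hU, ?_⟩
  have hconj : (W * τ.permMatrix ℂ * Vᴴ) * ρ * (W * τ.permMatrix ℂ * Vᴴ)ᴴ =
      W * diagonal (RCLike.ofReal ∘ hρ.eigenvalues ∘ τ) * Wᴴ := by
    conv_lhs => rw [hρ.spectral_theorem]
    exact unitary_perm_conj_diagonal hV W τ _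
  have hlog : matLog ((W * τ.permMatrix ℂ * Vᴴ) * ρ * (W * τ.permMatrix ℂ * Vᴴ)ᴴ) =
      W * diagonal (RCLike.ofReal ∘ Real.log ∘ hρ.eigenvalues ∘ τ) * Wᴴ := by
    rw [matLog_unitary_conj hU hρ, matLog_of_isHermitian hρ]
    exact unitary_perm_conj_diagonal hV W τ _
  rw [qRelEnt, hlog, hconj, matLog_of_isHermitian hσ, ← Matrix.sub_mul, ← Matrix.mul_sub,
    diagonal_sub, trace_unitary_conj_diagonal_mul hW, Complex.re_sum,
    evals_of_isHermitian hρ, evals_of_isHermitian hσ]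
  simp

theorem exists_unitary_qRelEnt_eq_relEnt {d : ℕ} (e : Fin d ≃ n) {ρ σ : Matrix n n ℂ}
    (hρ : ρ.IsHermitian) (hσ : σ.IsHermitian) (α β : Equiv.Perm (Fin d)) :
    ∃ U ∈ unitaryGroup n ℂ,
      qRelEnt (U * ρ * Uᴴ) σ = relEnt ((evals ρ ∘ e) ∘ α) ((evals σ ∘ e) ∘ β) := by
  obtain ⟨U, hU, hval⟩ :=
    exists_unitary_qRelEnt_eq_sum hρ hσ (e.symm.trans (β.symm.trans (α.trans e)))
  refine ⟨U, hU, ?_⟩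
  rw [hval, relEnt, ← Equiv.sum_comp (β.trans e)]
  simp

end UnitaryOrbit

lemma ptraceB_isHermitian {a b : ℕ} {ρ : Matrix (Fin a × Fin b) (Fin a × Fin b) ℂ}
    (hρ : ρ.IsHermitian) : (ptraceB ρ).IsHermitian := by
  ext i j
  simp only [ptraceB, conjTranspose_apply, star_sum]
  exact Finset.sum_congr rfl fun k _ => hρ.apply (i, k) (j, k)

lemma ptraceA_isHermitian {a b : ℕ} {ρ : Matrix (Fin a × Fin b) (Fin a × Fin b) ℂ}
    (hρ : ρ.IsHermitian) : (ptraceA ρ).IsHermitian := by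
  ext i j
  simp only [ptraceA, conjTranspose_apply, star_sum]
  exact Finset.sum_congr rfl fun k _ => hρ.apply (k, i) (k, j)

theorem exists_unitary_qRelEnt_eq_relEnt_sortDesc_sortAsc {d : ℕ}
    {ρ σ : Matrix (Fin d) (Fin d) ℂ} (hρ : ρ.IsHermitian) (hσ : σ.IsHermitian) :
    ∃ U ∈ unitaryGroup (Fin d) ℂ,
      qRelEnt (U * ρ * Uᴴ) σ = relEnt (sortDesc (evals ρ)) (sortAsc (evals σ)) :=
  exists_unitary_qRelEnt_eq_relEnt (Equiv.refl _) hρ hσ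
    (Fin.revPerm.trans (Tuple.sort (evals ρ))) (Tuple.sort (evals σ))

theorem exists_unitary_qRelEnt_eq_relEnt_sortDesc_sortDesc {a b : ℕ}
    {ρ σ : Matrix (Fin a × Fin b) (Fin a × Fin b) ℂ} (hρ : ρ.IsHermitian) (hσ : σ.IsHermitian) :
    ∃ U ∈ unitaryGroup (Fin a × Fin b) ℂ,
      qRelEnt (U * ρ * Uᴴ) σ = relEnt (sortDesc (evalsP ρ)) (sortDesc (evalsP σ)) :=
  exists_unitary_qRelEnt_eq_relEnt finProdFinEquiv.symm hρ hσ
    (Fin.revPerm.trans (Tuple.sort (evalsP ρ))) (Fin.revPerm.trans (Tuple.sort (evalsP σ)))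

theorem stmt_14_general {dA dB : ℕ}
    (ρ σ : Matrix (Fin dA × Fin dB) (Fin dA × Fin dB) ℂ)
    (hρ : ρ.PosSemidef)
    (hσ : σ.PosDef)
    (h : relEnt (sortDesc (evalsP ρ)) (sortDesc (evalsP σ)) ≥
        relEnt (sortDesc (evals (ptraceB ρ))) (sortAsc (evals (ptraceB σ))) +
        relEnt (sortDesc (evals (ptraceA ρ))) (sortAsc (evals (ptraceA σ)))) :
    ∃ UA ∈ Matrix.unitaryGroup (Fin dA) ℂ,
      ∃ UB ∈ Matrix.unitaryGroup (Fin dB) ℂ,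
        ∃ UAB ∈ Matrix.unitaryGroup (Fin dA × Fin dB) ℂ,
          qRelEnt (UAB * ρ * UABᴴ) σ ≥
            qRelEnt (UA * ptraceB ρ * UAᴴ) (ptraceB σ) +
            qRelEnt (UB * ptraceA ρ * UBᴴ) (ptraceA σ) := by
  obtain ⟨UA, hUA, hA⟩ := exists_unitary_qRelEnt_eq_relEnt_sortDesc_sortAsc
    (ptraceB_isHermitian hρ.isHermitian) (ptraceB_isHermitian hσ.isHermitian)
  obtain ⟨UB, hUB, hB⟩ := exists_unitary_qRelEnt_eq_relEnt_sortDesc_sortAsc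
    (ptraceA_isHermitian hρ.isHermitian) (ptraceA_isHermitian hσ.isHermitian)
  obtain ⟨UAB, hUAB, hAB⟩ :=
    exists_unitary_qRelEnt_eq_relEnt_sortDesc_sortDesc hρ.isHermitian hσ.isHermitian
  exact ⟨UA, hUA, UB, hUB, UAB, hUAB, by rwa [hA, hB, hAB]⟩

theorem stmt_14 {dA dB : ℕ}
    (ρ σ : Matrix (Fin dA × Fin dB) (Fin dA × Fin dB) ℂ)
    (hρ : ρ.PosSemidef) (hρ1 : ρ.trace = 1)
    (hσ : σ.PosDef) (hσ1 : σ.trace = 1)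
    (h : relEnt (sortDesc (evalsP ρ)) (sortDesc (evalsP σ)) ≥
        relEnt (sortDesc (evals (ptraceB ρ))) (sortAsc (evals (ptraceB σ))) +
        relEnt (sortDesc (evals (ptraceA ρ))) (sortAsc (evals (ptraceA σ)))) :
    ∃ UA ∈ Matrix.unitaryGroup (Fin dA) ℂ,
      ∃ UB ∈ Matrix.unitaryGroup (Fin dB) ℂ,
        ∃ UAB ∈ Matrix.unitaryGroup (Fin dA × Fin dB) ℂ,
          qRelEnt (UAB * ρ * UABᴴ) σ ≥
            qRelEnt (UA * ptraceB ρ * UAᴴ) (ptraceB σ) +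
            qRelEnt (UB * ptraceA ρ * UBᴴ) (ptraceA σ) :=
  stmt_14_general ρ σ hρ hσ h
end

section
/- With Δ̄ := H(λ↓(ρ_AB)‖λ↓(σ_AB)) − H(λ↓(ρ_A)‖λ↑(σ_A)) − H(λ↓(ρ_B)‖λ↑(σ_B)) and Δ := H(λ↓(ρ_AB)‖λ↑(σ_AB)) − H(λ↓(ρ_A)‖λ↓(σ_A)) − H(λ↓(ρ_B)‖λ↓(σ_B)), one has Δ̄ ≤ ΔS ≤ Δ, where ΔS := S(ρ_AB‖σ_AB) − S(ρ_A‖σ_A) − S(ρ_B‖σ_B). -/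
open Matrix ComplexOrder

/-!
Write `ρ = ∑ pᵢ |uᵢ⟩⟨uᵢ|` and `σ = ∑ qⱼ |vⱼ⟩⟨vⱼ|`. Then
`S(ρ‖σ) = ∑ pᵢ log pᵢ - ∑ᵢⱼ pᵢ |⟨uᵢ, vⱼ⟩|² log qⱼ`, and `|⟨uᵢ, vⱼ⟩|²` is a doubly stochastic
matrix. By Birkhoff's theorem the cross term is a convex combination of the pairings
`∑ pᵢ log q_{π i}`, which the rearrangement inequality places between the oppositely sorted and
the similarly sorted pairing. Hence `H(λ↓ρ‖λ↓σ) ≤ S(ρ‖σ) ≤ H(λ↓ρ‖λ↑σ)` for every pair of states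
with `σ > 0`; applying this to the pair on `AB` and to both pairs of marginals and subtracting
gives the two bounds.
-/

section Rearrangement

variable {d : ℕ}

lemma sortDesc_eq_sortAsc_comp_rev (p : Fin d → ℝ) : sortDesc p = sortAsc p ∘ Fin.rev := rfl

lemma sum_sortDesc (p : Fin d → ℝ) (f : ℝ → ℝ) : ∑ i, f (sortDesc p i) = ∑ i, f (p i) :=
  Equiv.sum_comp (Fin.revPerm.trans (Tuple.sort p)) (f ∘ p)

lemma sortAsc_comp_of_monotoneOn {φ : ℝ → ℝ} {s : Set ℝ} (hφ : MonotoneOn φ s)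
    {q : Fin d → ℝ} (hq : ∀ i, q i ∈ s) : sortAsc (φ ∘ q) = φ ∘ sortAsc q :=
  Tuple.unique_monotone (Tuple.monotone_sort _)
    fun _ _ hij => hφ (hq _) (hq _) (Tuple.monotone_sort q hij)

lemma sortDesc_comp_of_monotoneOn {φ : ℝ → ℝ} {s : Set ℝ} (hφ : MonotoneOn φ s)
    {q : Fin d → ℝ} (hq : ∀ i, q i ∈ s) : sortDesc (φ ∘ q) = φ ∘ sortDesc q := by
  rw [sortDesc_eq_sortAsc_comp_rev, sortAsc_comp_of_monotoneOn hφ hq]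
  rfl

lemma sum_sortDesc_mul_sortAsc_le (p c : Fin d → ℝ) (σ : Equiv.Perm (Fin d)) :
    ∑ i, sortDesc p i * sortAsc c i ≤ ∑ i, p i * c (σ i) := by
  set π := Fin.revPerm.trans (Tuple.sort p)
  have hanti : Antivary (sortDesc p) (sortAsc c) := fun i j hij =>
    Tuple.monotone_sort p (Fin.rev_le_rev.2 ((Tuple.monotone_sort c).reflect_lt hij).le)
  calc ∑ i, sortDesc p i * sortAsc c i
      ≤ ∑ i, sortDesc p i * sortAsc c (((Tuple.sort c).symm * σ * π) i) :=
        hanti.sum_smul_le_sum_smul_comp_perm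
    _ = ∑ i, p (π i) * c (σ (π i)) := by simp [sortAsc, sortDesc, π]
    _ = ∑ i, p i * c (σ i) := Equiv.sum_comp π (fun i => p i * c (σ i))

lemma sum_mul_comp_perm_le_sum_sortDesc_mul_sortDesc (p c : Fin d → ℝ) (σ : Equiv.Perm (Fin d)) :
    ∑ i, p i * c (σ i) ≤ ∑ i, sortDesc p i * sortDesc c i := by
  set π := Fin.revPerm.trans (Tuple.sort p)
  set π' := Fin.revPerm.trans (Tuple.sort c)
  have hmono : Monovary (sortDesc p) (sortDesc c) := fun i j hij =>
    Tuple.monotone_sort p ((Tuple.monotone_sort c).reflect_lt hij).le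
  calc ∑ i, p i * c (σ i) = ∑ i, p (π i) * c (σ (π i)) := (Equiv.sum_comp π _).symm
    _ = ∑ i, sortDesc p i * sortDesc c ((π'.symm * σ * π) i) := by
      simp [sortDesc, π, π']
    _ ≤ ∑ i, sortDesc p i * sortDesc c i := hmono.sum_smul_comp_perm_le_sum_smul

end Rearrangement

section DoublyStochastic

variable {n : Type*} [Fintype n] [DecidableEq n]

lemma dotProduct_mulVec_mem_of_mem_doublyStochastic {t : Set ℝ} (ht : Convex ℝ t)
    {D : Matrix n n ℝ} (hD : D ∈ doublyStochastic ℝ n) {p c : n → ℝ}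
    (h : ∀ σ : Equiv.Perm n, ∑ i, p i * c (σ i) ∈ t) : p ⬝ᵥ D *ᵥ c ∈ t := by
  obtain ⟨w, hw0, hw1, rfl⟩ := exists_eq_sum_perm_of_mem_doublyStochastic hD
  simp only [Matrix.sum_mulVec, Matrix.smul_mulVec, dotProduct_sum, dotProduct_smul,
    Matrix.permMatrix_mulVec]
  exact ht.sum_mem (fun σ _ => hw0 σ) hw1 fun σ _ => h σ

lemma sum_norm_sq_eq_one_of_mem_unitaryGroup {W : Matrix n n ℂ}
    (hW : W ∈ Matrix.unitaryGroup n ℂ) (i : n) : ∑ j, ‖W i j‖ ^ 2 = 1 := by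
  have h := congr_fun₂ (Matrix.mem_unitaryGroup_iff.1 hW) i i
  simp only [Matrix.mul_apply, Matrix.star_apply, RCLike.star_def, Complex.mul_conj',
    Matrix.one_apply_eq] at h
  exact_mod_cast h

lemma map_norm_sq_mem_doublyStochastic {W : Matrix n n ℂ}
    (hW : W ∈ Matrix.unitaryGroup n ℂ) : W.map (‖·‖ ^ 2) ∈ doublyStochastic ℝ n :=
  mem_doublyStochastic_iff_sum.2 ⟨fun _ _ => sq_nonneg _,
    sum_norm_sq_eq_one_of_mem_unitaryGroup hW,
    sum_norm_sq_eq_one_of_mem_unitaryGroup (Matrix.transpose_mem_unitaryGroup_iff.2 hW)⟩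

end DoublyStochastic

section SpectralTrace

variable {n : Type*} [Fintype n] [DecidableEq n]

lemma trace_diagonal_mul_diagonal_mul_star (W : Matrix n n ℂ) (p c : n → ℝ) :
    (diagonal (fun i => (p i : ℂ)) * W * diagonal (fun j => (c j : ℂ)) * star W).trace =
      ((p ⬝ᵥ W.map (‖·‖ ^ 2) *ᵥ c : ℝ) : ℂ) := by
  simp only [trace, diag, mul_apply (N := star W), mul_diagonal, diagonal_mul, star_apply,
    RCLike.star_def, dotProduct, mulVec, map_apply, Complex.ofReal_sum, Complex.ofReal_mul,
    Finset.mul_sum]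
  refine Finset.sum_congr rfl fun i _ => Finset.sum_congr rfl fun j _ => ?_
  push_cast
  rw [← Complex.mul_conj']
  ring

lemma re_trace_conj_diagonal_mul_conj_diagonal (U V : unitaryGroup n ℂ) (p c : n → ℝ) :
    ((U * diagonal (fun i => (p i : ℂ)) * (star U : Matrix n n ℂ)) *
        (V * diagonal (fun j => (c j : ℂ)) * (star V : Matrix n n ℂ))).trace.re =
      p ⬝ᵥ (star (U : Matrix n n ℂ) * V).map (‖·‖ ^ 2) *ᵥ c := by
  rw [← Complex.ofReal_re (p ⬝ᵥ _ *ᵥ c), ← trace_diagonal_mul_diagonal_mul_star,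
    star_mul, star_star]
  simp only [Matrix.mul_assoc]
  rw [trace_mul_comm]
  simp only [Matrix.mul_assoc]

lemma re_trace_mul_matLog {ρ σ : Matrix n n ℂ} (hρ : ρ.IsHermitian) (hσ : σ.IsHermitian) :
    (ρ * matLog σ).trace.re = hρ.eigenvalues ⬝ᵥ
      (star (hρ.eigenvectorUnitary : Matrix n n ℂ) * hσ.eigenvectorUnitary).map (‖·‖ ^ 2) *ᵥ
        (Real.log ∘ hσ.eigenvalues) := by
  rw [matLog, dif_pos hσ]
  conv_lhs => rw [hρ.spectral_theorem, Unitary.conjStarAlgAut_apply]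
  exact re_trace_conj_diagonal_mul_conj_diagonal _ _ _ _

lemma re_trace_mul_matLog_self {ρ : Matrix n n ℂ} (hρ : ρ.IsHermitian) :
    (ρ * matLog ρ).trace.re = ∑ i, hρ.eigenvalues i * Real.log (hρ.eigenvalues i) := by
  rw [re_trace_mul_matLog hρ hρ, Unitary.coe_star_mul_self, Matrix.map_one _ (by simp) (by simp),
    one_mulVec]
  rfl

lemma qRelEnt_eq {ρ σ : Matrix n n ℂ} (hρ : ρ.IsHermitian) (hσ : σ.IsHermitian) :
    qRelEnt ρ σ = ∑ i, hρ.eigenvalues i * Real.log (hρ.eigenvalues i) - hρ.eigenvalues ⬝ᵥ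
      (star (hρ.eigenvectorUnitary : Matrix n n ℂ) * hσ.eigenvectorUnitary).map (‖·‖ ^ 2) *ᵥ
        (Real.log ∘ hσ.eigenvalues) := by
  rw [qRelEnt, Matrix.mul_sub, trace_sub, Complex.sub_re, re_trace_mul_matLog_self hρ,
    re_trace_mul_matLog hρ hσ]

end SpectralTrace

lemma sum_mul_comp_perm_mem_Icc {d : ℕ} {n : Type*} [Fintype n] (e : Fin d ≃ n) (p c : n → ℝ)
    (τ : Equiv.Perm n) :
    ∑ i, p i * c (τ i) ∈ Set.Icc (∑ i, sortDesc (p ∘ e) i * sortAsc (c ∘ e) i)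
      (∑ i, sortDesc (p ∘ e) i * sortDesc (c ∘ e) i) := by
  have hτ : ∑ i, p i * c (τ i) = ∑ j, (p ∘ e) j * (c ∘ e) (e.symm.permCongr τ j) := by
    rw [← e.sum_comp]
    simp [Equiv.permCongr_apply]
  rw [hτ]
  exact ⟨sum_sortDesc_mul_sortAsc_le _ _ _, sum_mul_comp_perm_le_sum_sortDesc_mul_sortDesc _ _ _⟩

lemma relEnt_sortDesc_comp {d : ℕ} {n : Type*} [Fintype n] (e : Fin d ≃ n) (p : n → ℝ)
    (r : Fin d → ℝ) : relEnt (sortDesc (p ∘ e)) r =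
      ∑ i, p i * Real.log (p i) - ∑ i, sortDesc (p ∘ e) i * Real.log (r i) := by
  have hsort : ∑ i, sortDesc (p ∘ e) i * Real.log (sortDesc (p ∘ e) i) =
      ∑ i, p i * Real.log (p i) :=
    (sum_sortDesc (p ∘ e) fun x => x * Real.log x).trans (e.sum_comp fun i => p i * Real.log (p i))
  rw [← hsort, relEnt, ← Finset.sum_sub_distrib]
  simp only [mul_sub]

lemma evals_eq {n : Type*} [Fintype n] [DecidableEq n] {A : Matrix n n ℂ}
    (hA : A.IsHermitian) : evals A = hA.eigenvalues :=
  dif_pos hA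

theorem qRelEnt_mem_Icc {d : ℕ} {n : Type*} [Fintype n] [DecidableEq n] (e : Fin d ≃ n)
    {ρ σ : Matrix n n ℂ} (hρ : ρ.IsHermitian) (hσ : σ.PosDef) :
    qRelEnt ρ σ ∈ Set.Icc (relEnt (sortDesc (evals ρ ∘ e)) (sortDesc (evals σ ∘ e)))
      (relEnt (sortDesc (evals ρ ∘ e)) (sortAsc (evals σ ∘ e))) := by
  rw [evals_eq hρ, evals_eq hσ.1, qRelEnt_eq hρ hσ.1, relEnt_sortDesc_comp,
    relEnt_sortDesc_comp]
  have hlog : MonotoneOn Real.log (Set.Ioi 0) := Real.strictMonoOn_log.monotoneOn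
  have hq : ∀ i, (hσ.1.eigenvalues ∘ e) i ∈ Set.Ioi 0 := fun i => hσ.eigenvalues_pos (e i)
  have hT := dotProduct_mulVec_mem_of_mem_doublyStochastic (convex_Icc _ _)
    (map_norm_sq_mem_doublyStochastic (mul_mem (Unitary.star_mem hρ.eigenvectorUnitary.2)
      hσ.1.eigenvectorUnitary.2)) (sum_mul_comp_perm_mem_Icc e hρ.eigenvalues
        (Real.log ∘ hσ.1.eigenvalues))
  rw [Function.comp_assoc, sortAsc_comp_of_monotoneOn hlog hq,
    sortDesc_comp_of_monotoneOn hlog hq] at hT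
  simp only [Function.comp_apply] at hT
  exact ⟨by linarith [hT.2], by linarith [hT.1]⟩

section PartialTrace

variable {a b : ℕ}

lemma ptraceB_eq_sum_submatrix (ρ : Matrix (Fin a × Fin b) (Fin a × Fin b) ℂ) :
    ptraceB ρ = ∑ k, ρ.submatrix (·, k) (·, k) := by
  ext i j
  simp [ptraceB, Matrix.sum_apply]

lemma ptraceA_eq_ptraceB_submatrix_swap (ρ : Matrix (Fin a × Fin b) (Fin a × Fin b) ℂ) :
    ptraceA ρ = ptraceB (ρ.submatrix Prod.swap Prod.swap) :=
  rfl

lemma Matrix.PosSemidef.ptraceB {ρ : Matrix (Fin a × Fin b) (Fin a × Fin b) ℂ}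
    (hρ : ρ.PosSemidef) : (ptraceB ρ).PosSemidef := by
  rw [ptraceB_eq_sum_submatrix]
  exact posSemidef_sum _ fun k _ => hρ.submatrix _

lemma Matrix.PosSemidef.ptraceA {ρ : Matrix (Fin a × Fin b) (Fin a × Fin b) ℂ}
    (hρ : ρ.PosSemidef) : (ptraceA ρ).PosSemidef := by
  rw [ptraceA_eq_ptraceB_submatrix_swap]
  exact (hρ.submatrix Prod.swap).ptraceB

lemma Matrix.PosDef.ptraceB [Nonempty (Fin b)] {ρ : Matrix (Fin a × Fin b) (Fin a × Fin b) ℂ}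
    (hρ : ρ.PosDef) : (ptraceB ρ).PosDef := by
  rw [ptraceB_eq_sum_submatrix]
  exact posDef_sum Finset.univ_nonempty fun k _ =>
    hρ.submatrix fun _ _ h => (Prod.ext_iff.1 h).1

lemma Matrix.PosDef.ptraceA [Nonempty (Fin a)] {ρ : Matrix (Fin a × Fin b) (Fin a × Fin b) ℂ}
    (hρ : ρ.PosDef) : (ptraceA ρ).PosDef := by
  rw [ptraceA_eq_ptraceB_submatrix_swap]
  exact (hρ.submatrix Prod.swap_injective).ptraceB

end PartialTrace

theorem stmt_15_general {dA dB : ℕ}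
    (ρ σ : Matrix (Fin dA × Fin dB) (Fin dA × Fin dB) ℂ)
    (hρ : ρ.PosSemidef)
    (hσ : σ.PosDef) (hσ1 : σ.trace = 1) :
    relEnt (sortDesc (evalsP ρ)) (sortDesc (evalsP σ)) -
        relEnt (sortDesc (evals (ptraceB ρ))) (sortAsc (evals (ptraceB σ))) -
        relEnt (sortDesc (evals (ptraceA ρ))) (sortAsc (evals (ptraceA σ))) ≤
      qRelEnt ρ σ - qRelEnt (ptraceB ρ) (ptraceB σ) - qRelEnt (ptraceA ρ) (ptraceA σ) ∧
    qRelEnt ρ σ - qRelEnt (ptraceB ρ) (ptraceB σ) - qRelEnt (ptraceA ρ) (ptraceA σ) ≤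
      relEnt (sortDesc (evalsP ρ)) (sortAsc (evalsP σ)) -
        relEnt (sortDesc (evals (ptraceB ρ))) (sortDesc (evals (ptraceB σ))) -
        relEnt (sortDesc (evals (ptraceA ρ))) (sortDesc (evals (ptraceA σ))) := by
  have hne : Nonempty (Fin dA × Fin dB) := by
    by_contra h
    rw [not_nonempty_iff] at h
    simp [Matrix.trace] at hσ1
  have := hne.map Prod.fst
  have := hne.map Prod.snd
  obtain ⟨hAB₁, hAB₂⟩ := qRelEnt_mem_Icc finProdFinEquiv.symm hρ.1 hσ
  obtain ⟨hA₁, hA₂⟩ := qRelEnt_mem_Icc (Equiv.refl _) hρ.ptraceB.1 hσ.ptraceB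
  obtain ⟨hB₁, hB₂⟩ := qRelEnt_mem_Icc (Equiv.refl _) hρ.ptraceA.1 hσ.ptraceA
  simp only [Equiv.coe_refl, Function.comp_id] at hA₁ hA₂ hB₁ hB₂
  unfold evalsP
  exact ⟨by linarith, by linarith⟩

theorem stmt_15 {dA dB : ℕ}
    (ρ σ : Matrix (Fin dA × Fin dB) (Fin dA × Fin dB) ℂ)
    (hρ : ρ.PosSemidef) (hρ1 : ρ.trace = 1)
    (hσ : σ.PosDef) (hσ1 : σ.trace = 1) :
    relEnt (sortDesc (evalsP ρ)) (sortDesc (evalsP σ)) -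
        relEnt (sortDesc (evals (ptraceB ρ))) (sortAsc (evals (ptraceB σ))) -
        relEnt (sortDesc (evals (ptraceA ρ))) (sortAsc (evals (ptraceA σ))) ≤
      qRelEnt ρ σ - qRelEnt (ptraceB ρ) (ptraceB σ) - qRelEnt (ptraceA ρ) (ptraceA σ) ∧
    qRelEnt ρ σ - qRelEnt (ptraceB ρ) (ptraceB σ) - qRelEnt (ptraceA ρ) (ptraceA σ) ≤
      relEnt (sortDesc (evalsP ρ)) (sortAsc (evalsP σ)) -
        relEnt (sortDesc (evals (ptraceB ρ))) (sortDesc (evals (ptraceB σ))) -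
        relEnt (sortDesc (evals (ptraceA ρ))) (sortDesc (evals (ptraceA σ))) :=
  stmt_15_general ρ σ hρ hσ hσ1
end
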